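/- Let p be a prime, let P be a Heisenberg 𝔽_p-group with |P| > p, and let ψ : Z(P) → ℂˣ be a nontrivial character, with Heisenberg representation ω_ψ on the complex vector space V. Conjugation induces a well-defined action of V_P := P/Z(P) on P by automorphisms (since Z(P) is central). Then there is no group homomorphism π : V_P ⋉ P → GL(V) satisfying π(1, x) = ω_ψ(x) for all x ∈ P; i.e., the Heisenberg representation does not extend to the semidirect product V_P ⋉ P. -/

import Mathlib

/-!
If `π` extended `ω`, then for each `x : P` the element `(inr [x])⁻¹ * inl x` of `V_P ⋉ P`
would centralise `inl P`, so by Schur `π` maps it to a scalar and `ω x` is a multiple of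
`π (inr [x])`. As `V_P` is abelian, the `ω x` would then commute with each other, so `ψ` would
vanish on all commutators. Since `|P| > p = |Z(P)|`, `P` is nonabelian, so some commutator is a
nontrivial element of `Z(P)`; as `|Z(P)|` is prime it generates `Z(P)`, forcing `ψ = 1`.
-/

open scoped commutatorElement

/-- A *Heisenberg `𝔽_p`-group*. -/
structure IsHeisenberg (p : ℕ) (P : Type*) [Group P] : Prop where
  card_center : Nat.card (Subgroup.center P) = p
  commutator_mem : ∀ x y : P, ⁅x, y⁆ ∈ Subgroup.center P
  pow_mem_center : ∀ x : P, x ^ p ∈ Subgroup.center P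
  pow_eq_one : p ≠ 2 → ∀ x : P, x ^ p = 1

/-- Irreducibility of a complex representation. -/
def IsIrrep {G : Type*} [Group G] {V : Type*} [AddCommGroup V] [Module ℂ V]
    (ρ : Representation ℂ G V) : Prop :=
  Nontrivial V ∧
    ∀ W : Submodule ℂ V, (∀ (g : G) (v : V), v ∈ W → ρ g v ∈ W) → W = ⊥ ∨ W = ⊤

/-- `ρ` has central character `ψ`. -/
def HasCentralCharacter {P : Type*} [Group P] {V : Type*} [AddCommGroup V]
    [Module ℂ V] (ρ : Representation ℂ P V)
    (ψ : ↥(Subgroup.center P) →* ℂˣ) : Prop :=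
  ∀ z : ↥(Subgroup.center P),
    ρ (z : P) = (((ψ z : ℂˣ) : ℂ) • LinearMap.id : V →ₗ[ℂ] V)

/-- The (well-defined) conjugation action of `V_P = P/Z(P)` on `P`. -/
def conjQuot (P : Type*) [Group P] : P ⧸ Subgroup.center P →* MulAut P :=
  QuotientGroup.lift (Subgroup.center P) MulAut.conj
    (fun z hz => by
      ext x
      rw [MulAut.conj_apply, MulAut.one_apply,
        ← Subgroup.mem_center_iff.mp hz x, mul_inv_cancel_right])

open SemidirectProduct

section IsIrrep

variable {G : Type*} [Group G] {V : Type*} [AddCommGroup V] [Module ℂ V]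
  {ρ : Representation ℂ G V}

/-- The span of any orbit is invariant, so by irreducibility it is all of `V`. -/
lemma IsIrrep.finiteDimensional [Finite G] (hρ : IsIrrep ρ) : FiniteDimensional ℂ V := by
  have := hρ.1
  obtain ⟨u, hu⟩ := exists_ne (0 : V)
  let W := Submodule.span ℂ (Set.range fun g : G => ρ g u)
  have hW : ∀ (g : G) (v : V), v ∈ W → ρ g v ∈ W := by
    intro g v hv
    induction hv using Submodule.span_induction with
    | mem y hy =>
      obtain ⟨h, rfl⟩ := hy
      exact Submodule.subset_span ⟨g * h, by simp⟩
    | zero => simp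
    | add y z _ _ hy hz => rw [map_add]; exact W.add_mem hy hz
    | smul c y _ hy => rw [map_smul]; exact W.smul_mem c hy
  have hu_mem : u ∈ W := Submodule.subset_span ⟨1, by simp⟩
  have hW_top : W = ⊤ :=
    (hρ.2 W hW).resolve_left fun h => hu (by rwa [h, Submodule.mem_bot] at hu_mem)
  have : Module.Finite ℂ W := Module.Finite.span_of_finite ℂ (Set.finite_range _)
  exact Module.Finite.equiv ((LinearEquiv.ofEq W ⊤ hW_top).trans Submodule.topEquiv)

/-- Schur's lemma: an eigenspace of `T` is a nonzero invariant subspace. -/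
lemma IsIrrep.exists_eq_smul_one_of_commute [FiniteDimensional ℂ V] (hρ : IsIrrep ρ)
    {T : Module.End ℂ V} (hT : ∀ g, Commute T (ρ g)) : ∃ μ : ℂ, T = μ • 1 := by
  have := hρ.1
  obtain ⟨μ, hμ⟩ := T.exists_eigenvalue
  have hinv : ∀ (g : G) (v : V), v ∈ T.eigenspace μ → ρ g v ∈ T.eigenspace μ :=
    fun g _ hv => Module.End.mapsTo_genEigenspace_of_comm (hT g) μ 1 hv
  have htop : T.eigenspace μ = ⊤ := (hρ.2 _ hinv).resolve_left hμ
  refine ⟨μ, LinearMap.ext fun v => ?_⟩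
  simpa using Module.End.mem_eigenspace_iff.mp (htop ▸ Submodule.mem_top : v ∈ T.eigenspace μ)

end IsIrrep

lemma MonoidHom.map_commutatorElement_of_commute {G M : Type*} [Group G] [Monoid M]
    (f : G →* M) {x y : G} (h : Commute (f x) (f y)) : f ⁅x, y⁆ = 1 := by
  rw [commutatorElement_def, show x * y * x⁻¹ * y⁻¹ = x * y * (y * x)⁻¹ by group, map_mul,
    map_mul f x y, h.eq, ← map_mul, ← map_mul, mul_inv_cancel, map_one]

lemma conjQuot_mk_apply {P : Type*} [Group P] (x n : P) :
    conjQuot P (x : P ⧸ Subgroup.center P) n = x * n * x⁻¹ := rfl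

/-- `inl x` and `inr [x]` act on `inl P` in the same way. -/
lemma commute_inr_inv_mul_inl {P : Type*} [Group P] (x n : P) :
    Commute ((inr (x : P ⧸ Subgroup.center P))⁻¹ * inl x : P ⋊[conjQuot P] _) (inl n) := by
  have hconj : (inl x * inl n : P ⋊[conjQuot P] _) =
      inr (x : P ⧸ Subgroup.center P) * inl n * inr (x : P ⧸ Subgroup.center P)⁻¹ *
        inl x := by
    rw [← inl_aut, conjQuot_mk_apply, ← map_mul, ← map_mul]
    group
  rw [Commute, SemiconjBy, mul_assoc, hconj, map_inv]
  group

namespace IsHeisenberg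

variable {p : ℕ} {P : Type*} [Group P]

lemma commute_mk (hP : IsHeisenberg p P) (x y : P) :
    Commute (x : P ⧸ Subgroup.center P) (y : P ⧸ Subgroup.center P) := by
  rw [Commute, SemiconjBy, ← QuotientGroup.mk_mul, ← QuotientGroup.mk_mul, QuotientGroup.eq]
  convert hP.commutator_mem y⁻¹ x⁻¹ using 1
  group

lemma exists_commutatorElement_ne_one [Finite P] (hP : IsHeisenberg p P)
    (hbig : p < Nat.card P) : ∃ x y : P, ⁅x, y⁆ ≠ 1 := by
  by_contra! hcomm
  have hcenter : Subgroup.center P = ⊤ := by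
    rw [Subgroup.eq_top_iff']
    exact fun x => Subgroup.mem_center_iff.mpr fun y =>
      commutatorElement_eq_one_iff_mul_comm.mp (hcomm y x)
  have := (Subgroup.card_eq_iff_eq_top _).mpr hcenter
  rw [hP.card_center] at this
  omega

lemma eq_one_of_map_commutatorElement [Finite P] (hP : IsHeisenberg p P) (hp : p.Prime)
    (hbig : p < Nat.card P) {M : Type*} [Group M] (χ : Subgroup.center P →* M)
    (hχ : ∀ x y : P, χ ⟨⁅x, y⁆, hP.commutator_mem x y⟩ = 1) : χ = 1 := by
  have : Fact (Nat.card (Subgroup.center P)).Prime := ⟨hP.card_center ▸ hp⟩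
  rcases χ.ker.eq_bot_or_eq_top_of_prime_card with hker | hker
  · obtain ⟨x, y, hxy⟩ := hP.exists_commutatorElement_ne_one hbig
    have hmem : (⟨⁅x, y⁆, hP.commutator_mem x y⟩ : Subgroup.center P) ∈ χ.ker := hχ x y
    rw [hker, Subgroup.mem_bot] at hmem
    exact absurd (congrArg Subtype.val hmem) hxy
  · exact MonoidHom.ker_eq_top_iff.mp hker

end IsHeisenberg

section Extension

variable {P : Type*} [Group P] {V : Type*} [AddCommGroup V] [Module ℂ V]
  {ω : Representation ℂ P V}
  {π : Representation ℂ (P ⋊[conjQuot P] (P ⧸ Subgroup.center P)) V}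

lemma IsIrrep.exists_eq_smul_inr_of_extends [FiniteDimensional ℂ V] (hω : IsIrrep ω)
    (hπ : ∀ x : P, π (inl x) = ω x) (x : P) :
    ∃ μ : ℂ, ω x = μ • π (inr (x : P ⧸ Subgroup.center P)) := by
  obtain ⟨μ, hμ⟩ := hω.exists_eq_smul_one_of_commute
    (T := π ((inr (x : P ⧸ Subgroup.center P))⁻¹ * inl x))
    fun n => hπ n ▸ (commute_inr_inv_mul_inl x n).map π
  refine ⟨μ, ?_⟩
  rw [← hπ, ← mul_inv_cancel_left (inr (x : P ⧸ Subgroup.center P)) (inl x), map_mul, hμ,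
    mul_smul_comm, mul_one]

lemma IsHeisenberg.commute_of_extends {p : ℕ} [FiniteDimensional ℂ V] (hP : IsHeisenberg p P)
    (hω : IsIrrep ω) (hπ : ∀ x : P, π (inl x) = ω x) (x y : P) : Commute (ω x) (ω y) := by
  obtain ⟨μ, hμ⟩ := hω.exists_eq_smul_inr_of_extends hπ x
  obtain ⟨ν, hν⟩ := hω.exists_eq_smul_inr_of_extends hπ y
  rw [hμ, hν]
  exact ((((hP.commute_mk x y).map inr).map π).smul_left μ).smul_right ν

end Extension

/-- For `P` a Heisenberg `𝔽_p`-group with `|P| > p`, `ψ` a nontrivial central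
character and `ω` the Heisenberg representation attached to `ψ`, there is no
representation of the semidirect product `V_P ⋉ P` (for the conjugation
action of `V_P = P/Z(P)` on `P`) extending `ω`. -/
theorem stmt_15 (p : ℕ) (hp : p.Prime)
    (P : Type*) [Group P] [Finite P] (hP : IsHeisenberg p P)
    (hbig : p < Nat.card P)
    (ψ : ↥(Subgroup.center P) →* ℂˣ) (hψ : ψ ≠ 1)
    (V : Type*) [AddCommGroup V] [Module ℂ V] (ω : Representation ℂ P V)
    (hirr : IsIrrep ω) (hcent : HasCentralCharacter ω ψ) :
    ¬ ∃ π : Representation ℂ (P ⋊[conjQuot P] (P ⧸ Subgroup.center P)) V,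
        ∀ x : P, π (SemidirectProduct.inl x) = ω x := by
  rintro ⟨π, hπ⟩
  have := hirr.1
  have := hirr.finiteDimensional
  refine hψ (hP.eq_one_of_map_commutatorElement hp hbig ψ fun x y => ?_)
  have hω_one : ω ⁅x, y⁆ = 1 :=
    ω.map_commutatorElement_of_commute (hP.commute_of_extends hirr hπ x y)
  have hω_scalar : ω ⁅x, y⁆ = _ := hcent ⟨_, hP.commutator_mem x y⟩
  rw [hω_one, ← Module.End.one_eq_id] at hω_scalar
  exact Units.val_eq_one.mp
    (smul_left_injective ℂ one_ne_zero (hω_scalar.symm.trans (one_smul ℂ 1).symm))
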